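/- Let r be a rational function of degree N and α ∈ Ω(r) with distinct preimages w_1, …, w_N. Then every f ∈ 𝔏(r) satisfies the partial fraction identity f(z)/(r(z) − α) = Σ_{n=1}^N f(w_n)/(r′(w_n)(z − w_n)) for z not a pole of r and r(z) ≠ α. -/

import Mathlib

open Polynomial

noncomputable section

/-- The rational function `r = p/q`, evaluated pointwise. -/
def ratEval (p q : Polynomial ℂ) (z : ℂ) : ℂ := p.eval z / q.eval z

/-- The difference quotient `z ↦ (r(z) − r(a))/(z − a)` (equal to `r′(a)` at `z = a`). -/
def dq (p q : Polynomial ℂ) (a : ℂ) : ℂ → ℂ :=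
  fun z => if z = a then deriv (ratEval p q) a
           else (ratEval p q z - ratEval p q a) / (z - a)

/-- The state space `𝔏(r)`: the span of the difference quotients of `r = p/q`. -/
def stateSpace (p q : Polynomial ℂ) : Submodule ℂ (ℂ → ℂ) :=
  Submodule.span ℂ {f | ∃ a : ℂ, q.eval a ≠ 0 ∧ f = dq p q a}

/-! On a generator `f = dq p q a` of `𝔏(r)` one has `f = h / q` with `deg h < N`, while
`r - α = P / q` for `P = p - α q`, a polynomial of degree `≤ N` vanishing at the `N` distinct
points `wₙ`. Hence `f / (r - α) = h / P`, whose partial fraction expansion (Lagrange interpolation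
of `h` at the nodes `wₙ`) is `∑ₙ h(wₙ) / (P'(wₙ) (z - wₙ))`; and `P'(wₙ) / q(wₙ) = r'(wₙ)` because
`P(wₙ) = 0`. Both sides are linear in `f`, so the identity passes from the generators to their
span. -/

open Finset Topology

namespace Lagrange

variable {F : Type*} [Field F] {ι : Type*} {s : Finset ι} {v : ι → F}

theorem eq_C_mul_nodal {P : F[X]} (hvs : Set.InjOn v s) (hP : P.natDegree ≤ #s)
    (hroot : ∀ i ∈ s, P.IsRoot (v i)) : P = C (P.coeff #s) * nodal s v := by
  refine eq_of_degree_sub_lt_of_eval_index_eq s hvs ?_ fun i hi => ?_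
  · rw [degree_lt_iff_coeff_zero]
    intro m hm
    rcases hm.eq_or_lt with rfl | hm
    · rw [coeff_sub, coeff_C_mul, ← natDegree_nodal (v := v), nodal_monic.coeff_natDegree]
      simp [natDegree_nodal]
    · rw [coeff_sub, coeff_C_mul, coeff_eq_zero_of_natDegree_lt (hP.trans_lt hm),
        coeff_eq_zero_of_natDegree_lt (natDegree_nodal.trans_lt hm), mul_zero, sub_zero]
  · simp [(hroot i hi).eq_zero, eval_nodal_at_node hi]

theorem eval_div_eval_nodal {f : F[X]} {x : F} (hvs : Set.InjOn v s) (hf : f.degree < #s)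
    (hx : ∀ i ∈ s, x ≠ v i) :
    f.eval x / (nodal s v).eval x
      = ∑ i ∈ s, f.eval (v i) / ((nodal s v).derivative.eval (v i) * (x - v i)) := by
  classical
  conv_lhs => rw [eq_interpolate hvs hf]
  rw [eval_interpolate_not_at_node _ hx, mul_div_cancel_left₀ _ (eval_nodal_not_at_node hx)]
  refine sum_congr rfl fun i hi => ?_
  rw [nodalWeight_eq_eval_derivative_nodal hi, div_eq_mul_inv, mul_inv]
  ring

theorem eval_div_eq_sum_div_derivative {f P : F[X]} {x : F} (hvs : Set.InjOn v s)
    (hP : P.natDegree ≤ #s) (hroot : ∀ i ∈ s, P.IsRoot (v i)) (hf : f.degree < #s)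
    (hx : P.eval x ≠ 0) :
    f.eval x / P.eval x = ∑ i ∈ s, f.eval (v i) / (P.derivative.eval (v i) * (x - v i)) := by
  have hxv : ∀ i ∈ s, x ≠ v i := fun i hi hxi => hx (hxi ▸ hroot i hi)
  rw [eq_C_mul_nodal hvs hP hroot]
  simp only [eval_mul, eval_C, derivative_mul, derivative_C, zero_mul, zero_add]
  rw [mul_comm, ← div_div, eval_div_eval_nodal hvs hf hxv, sum_div]
  exact sum_congr rfl fun i _ => by rw [div_div]; ring

end Lagrange

variable {p q : ℂ[X]} {a y : ℂ}

theorem deriv_ratEval (ha : q.eval a ≠ 0) :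
    deriv (ratEval p q) a
      = (p.derivative.eval a * q.eval a - p.eval a * q.derivative.eval a) / q.eval a ^ 2 :=
  ((p.hasDerivAt a).div (q.hasDerivAt a) ha).deriv

theorem ratEval_sub_eq_eval_div (α : ℂ) (hy : q.eval y ≠ 0) :
    ratEval p q y - α = (p - C α * q).eval y / q.eval y := by
  simp only [ratEval, eval_sub, eval_mul, eval_C]
  field_simp

theorem deriv_ratEval_eq_of_eval_eq {α : ℂ} (ha : q.eval a ≠ 0)
    (hα : p.eval a = α * q.eval a) :
    deriv (ratEval p q) a = (p - C α * q).derivative.eval a / q.eval a := by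
  rw [deriv_ratEval ha, hα]
  simp only [derivative_sub, derivative_mul, derivative_C, zero_mul, zero_add, eval_sub,
    eval_mul, eval_C]
  field_simp

variable (p q a) in
def dqNumerator : ℂ[X] := (p - C (ratEval p q a) * q) /ₘ (X - C a)

theorem degree_dqNumerator_lt (hdeg : q.natDegree ≤ p.natDegree) :
    (dqNumerator p q a).degree < p.natDegree := by
  rw [dqNumerator]
  rcases eq_or_ne (p - C (ratEval p q a) * q) 0 with hA | hA
  · rw [hA, zero_divByMonic, degree_zero]
    exact WithBot.bot_lt_coe _
  · refine (degree_divByMonic_lt _ _ hA (by simp)).trans_le ?_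
    exact degree_le_of_natDegree_le
      ((natDegree_sub_le _ _).trans (max_le le_rfl ((natDegree_C_mul_le _ _).trans hdeg)))

theorem ratEval_eq_add_mul_dqNumerator (ha : q.eval a ≠ 0) (hy : q.eval y ≠ 0) :
    ratEval p q y = ratEval p q a + (y - a) * ((dqNumerator p q a).eval y / q.eval y) := by
  have hroot : (p - C (ratEval p q a) * q).IsRoot a := by
    simp only [IsRoot, eval_sub, eval_mul, eval_C, ratEval]
    field_simp
    ring
  have hfac := congrArg (eval y) (mul_divByMonic_eq_iff_isRoot.2 hroot)
  simp only [eval_mul, eval_sub, eval_X, eval_C] at hfac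
  rw [dqNumerator, ← mul_div_assoc, hfac, ratEval, ratEval]
  field_simp
  ring

theorem dq_eq_eval_dqNumerator_div (ha : q.eval a ≠ 0) (hy : q.eval y ≠ 0) :
    dq p q a y = (dqNumerator p q a).eval y / q.eval y := by
  rcases eq_or_ne y a with rfl | hya
  · have hr : ratEval p q =ᶠ[𝓝 y]
        fun x => ratEval p q y + (x - y) * ((dqNumerator p q y).eval x / q.eval x) :=
      (q.continuous.continuousAt.eventually_ne ha).mono fun x hx =>
        ratEval_eq_add_mul_dqNumerator ha hx
    have hd := ((((hasDerivAt_id y).sub_const y).mul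
      (((dqNumerator p q y).hasDerivAt y).div (q.hasDerivAt y) ha)).const_add
      (ratEval p q y)).congr_of_eventuallyEq hr
    rw [dq, if_pos rfl, hd.deriv]
    simp
  · rw [dq, if_neg hya, ratEval_eq_add_mul_dqNumerator ha hy, add_sub_cancel_left,
      mul_div_cancel_left₀ _ (sub_ne_zero.2 hya)]

theorem dq_div_ratEval_sub_eq_sum {ι : Type*} [Fintype ι] {α z : ℂ} {w : ι → ℂ}
    (hdeg : q.natDegree ≤ p.natDegree) (hw : Function.Injective w)
    (hN : p.natDegree = Fintype.card ι) (hroot : ∀ i, p.eval (w i) = α * q.eval (w i))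
    (hq : ∀ i, q.eval (w i) ≠ 0) (ha : q.eval a ≠ 0) (hz : q.eval z ≠ 0)
    (hne : ratEval p q z ≠ α) :
    dq p q a z / (ratEval p q z - α)
      = ∑ i, dq p q a (w i) / (deriv (ratEval p q) (w i) * (z - w i)) := by
  have hPz : (p - C α * q).eval z ≠ 0 := by
    have := sub_ne_zero.2 hne
    rw [ratEval_sub_eq_eval_div α hz] at this
    exact (div_ne_zero_iff.1 this).1
  have hP : (p - C α * q).natDegree ≤ #(univ : Finset ι) := by
    rw [card_univ, ← hN]
    exact (natDegree_sub_le _ _).trans (max_le le_rfl ((natDegree_C_mul_le _ _).trans hdeg))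
  have hnum : (dqNumerator p q a).degree < #(univ : Finset ι) := by
    rw [card_univ, ← hN]
    exact degree_dqNumerator_lt hdeg
  rw [ratEval_sub_eq_eval_div α hz, dq_eq_eval_dqNumerator_div ha hz,
    div_div_div_cancel_right₀ hz,
    Lagrange.eval_div_eq_sum_div_derivative hw.injOn hP (fun i _ => by simp [hroot]) hnum hPz]
  refine sum_congr rfl fun i _ => ?_
  rw [dq_eq_eval_dqNumerator_div ha (hq i), deriv_ratEval_eq_of_eval_eq (hq i) (hroot i),
    div_mul_eq_mul_div, div_div_div_cancel_right₀ (hq i)]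

theorem stmt8_general (p q : Polynomial ℂ) (N : ℕ)
    (hN : p.natDegree = N) (hdeg : q.natDegree ≤ p.natDegree)
    (α : ℂ) (w : Fin N → ℂ) (hw : Function.Injective w)
    (hroot : ∀ n, p.eval (w n) = α * q.eval (w n)) (hq : ∀ n, q.eval (w n) ≠ 0)
    (f : ℂ → ℂ) (hf : f ∈ stateSpace p q) :
    ∀ z : ℂ, q.eval z ≠ 0 → ratEval p q z ≠ α →
      f z / (ratEval p q z - α)
        = ∑ n : Fin N, f (w n) / (deriv (ratEval p q) (w n) * (z - w n)) := by
  intro z hz hne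
  let lhs : (ℂ → ℂ) →ₗ[ℂ] ℂ := (ratEval p q z - α)⁻¹ • LinearMap.proj z
  let rhs : (ℂ → ℂ) →ₗ[ℂ] ℂ :=
    ∑ n, (deriv (ratEval p q) (w n) * (z - w n))⁻¹ • LinearMap.proj (w n)
  have hgen : Set.EqOn lhs rhs {f | ∃ a, q.eval a ≠ 0 ∧ f = dq p q a} := by
    rintro _ ⟨a, ha, rfl⟩
    simpa [lhs, rhs, div_eq_inv_mul] using
      dq_div_ratEval_sub_eq_sum hdeg hw (by simp [hN]) hroot hq ha hz hne
  simpa [lhs, rhs, div_eq_inv_mul] using LinearMap.eqOn_span hgen hf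

/-- every `f ∈ 𝔏(r)` satisfies
`f(z)/(r(z) − α) = Σₙ f(wₙ)/(r′(wₙ)(z − wₙ))` where `w 0, …, w (N-1)` are the
distinct preimages of `α ∈ Ω(r)`. -/
theorem stmt8 (p q : Polynomial ℂ) (hco : IsCoprime p q) (N : ℕ)
    (hN : p.natDegree = N) (hdeg : q.natDegree ≤ p.natDegree)
    (α : ℂ) (w : Fin N → ℂ) (hw : Function.Injective w)
    (hroot : ∀ n, p.eval (w n) = α * q.eval (w n)) (hq : ∀ n, q.eval (w n) ≠ 0)
    (f : ℂ → ℂ) (hf : f ∈ stateSpace p q) :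
    ∀ z : ℂ, q.eval z ≠ 0 → ratEval p q z ≠ α →
      f z / (ratEval p q z - α)
        = ∑ n : Fin N, f (w n) / (deriv (ratEval p q) (w n) * (z - w n)) :=
  stmt8_general p q N hN hdeg α w hw hroot hq f hf

end
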